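/- Let w : ℕ → {a,b} be a right-infinite binary word. The following are equivalent: (1) w is eventually periodic; (2) there exists a positive integer n with p(w,n) ≤ n; (3) there exists an integer N such that p(w,n) ≤ N for all n ≥ 1. -/

import Mathlib

/-!
Morse–Hedlund. The number of factors of length `n` is the number of distinct windows
`w i, …, w (i + n - 1)`; dropping the last letter maps the factors of length `n + 1` onto those
of length `n`, so the complexity is nondecreasing and starts at `complexity w 0 = 1`. If it never
stalls it grows at least like `n + 1`. If it stalls at `n`, the window of length `n + 1` at `i`
determines the one at `i + 1`; windows take finitely many values, so two of them coincide and the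
whole word is periodic from there on. Conversely, an eventually periodic word with preperiod `N`
and period `p` has at most `N + p` distinct suffixes, hence at most `N + p` factors of each length.
-/

namespace StringBricks

def IsFactor (w : ℕ → Bool) (u : List Bool) : Prop :=
  ∃ i : ℕ, ∀ j : Fin u.length, w (i + j) = u.get j

def EventuallyPeriodic (w : ℕ → Bool) : Prop :=
  ∃ N p : ℕ, 1 ≤ p ∧ ∀ n : ℕ, N ≤ n → w (n + p) = w n

/-- The complexity function: the number of distinct factors of `w` of length `n`. -/
noncomputable def complexity (w : ℕ → Bool) (n : ℕ) : ℕ :=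
  Set.ncard {u : List Bool | u.length = n ∧ IsFactor w u}

theorem exists_eventual_period_of_finite_range {α : Type*} {f : ℕ → α}
    (hf : (Set.range f).Finite) (hdet : ∀ i j, f i = f j → f (i + 1) = f (j + 1)) :
    ∃ N p, 0 < p ∧ ∀ n, N ≤ n → f (n + p) = f n := by
  obtain ⟨i, j, hij, hfij⟩ := hf.exists_lt_map_eq_of_forall_mem (f := f) Set.mem_range_self
  have hshift : ∀ k, f (j + k) = f (i + k) := by
    intro k
    induction k with
    | zero => exact hfij.symm
    | succ k ih => exact hdet _ _ ih
  refine ⟨i, j - i, by omega, fun n hn => ?_⟩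
  obtain ⟨k, rfl⟩ := Nat.exists_eq_add_of_le hn
  rw [show i + k + (j - i) = j + k by omega, hshift]

def window (w : ℕ → Bool) (i n : ℕ) : List Bool :=
  List.ofFn fun j : Fin n => w (i + j)

@[simp]
theorem length_window (w : ℕ → Bool) (i n : ℕ) : (window w i n).length = n :=
  List.length_ofFn

theorem window_succ (w : ℕ → Bool) (i n : ℕ) :
    window w i (n + 1) = w i :: window w (i + 1) n := by
  simp only [window, List.ofFn_succ, Fin.val_zero, add_zero, Fin.val_succ, add_assoc, add_comm 1]

theorem dropLast_window_succ (w : ℕ → Bool) (i n : ℕ) :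
    (window w i (n + 1)).dropLast = window w i n := by
  rw [window, List.ofFn_succ', List.concat_eq_append, List.dropLast_concat]
  rfl

theorem isFactor_iff_exists_window (w : ℕ → Bool) (u : List Bool) :
    IsFactor w u ↔ ∃ i, window w i u.length = u := by
  conv_rhs => enter [1, i, 2]; rw [← List.ofFn_get u]
  simp only [IsFactor, window, List.ofFn_inj, funext_iff]

theorem complexity_eq_ncard_range_window (w : ℕ → Bool) (n : ℕ) :
    complexity w n = (Set.range fun i => window w i n).ncard := by
  rw [complexity]
  congr 1
  ext u
  simp only [Set.mem_ofPred_eq, Set.mem_range, isFactor_iff_exists_window]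
  constructor
  · rintro ⟨rfl, h⟩
    exact h
  · rintro ⟨i, rfl⟩
    exact ⟨length_window w i n, i, by rw [length_window]⟩

theorem finite_range_window (w : ℕ → Bool) (n : ℕ) :
    (Set.range fun i => window w i n).Finite :=
  (List.finite_length_eq Bool n).subset <| Set.range_subset_iff.2 fun i => length_window w i n

theorem range_window_eq_image_dropLast (w : ℕ → Bool) (n : ℕ) :
    (Set.range fun i => window w i n) =
      List.dropLast '' Set.range fun i => window w i (n + 1) := by
  simp only [← Set.range_comp, Function.comp_def, dropLast_window_succ]

theorem complexity_zero (w : ℕ → Bool) : complexity w 0 = 1 := by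
  rw [complexity_eq_ncard_range_window, ← Set.ncard_singleton ([] : List Bool)]
  congr 1
  exact Set.range_const

theorem complexity_le_complexity_succ (w : ℕ → Bool) (n : ℕ) :
    complexity w n ≤ complexity w (n + 1) := by
  simp only [complexity_eq_ncard_range_window, range_window_eq_image_dropLast w n]
  exact Set.ncard_image_le (finite_range_window w _)

/-- If the complexity does not grow from `n` to `n + 1`, every factor of length `n` extends
uniquely to the right, so the window of length `n + 1` at `i` determines the one at `i + 1`. -/
theorem eventuallyPeriodic_of_complexity_succ_le {w : ℕ → Bool} {n : ℕ}
    (h : complexity w (n + 1) ≤ complexity w n) : EventuallyPeriodic w := by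
  have hinj : Set.InjOn List.dropLast (Set.range fun i => window w i (n + 1)) := by
    refine Set.injOn_of_ncard_image_eq ?_ (finite_range_window w _)
    rw [← range_window_eq_image_dropLast, ← complexity_eq_ncard_range_window,
      ← complexity_eq_ncard_range_window]
    exact le_antisymm (complexity_le_complexity_succ w n) h
  have hdet : ∀ i j, window w i (n + 1) = window w j (n + 1) →
      window w (i + 1) (n + 1) = window w (j + 1) (n + 1) := by
    intro i j hij
    rw [window_succ, window_succ, List.cons.injEq] at hij
    refine hinj ⟨i + 1, rfl⟩ ⟨j + 1, rfl⟩ ?_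
    simp only [dropLast_window_succ, hij.2]
  obtain ⟨N, p, hp, hper⟩ :=
    exists_eventual_period_of_finite_range (finite_range_window w (n + 1)) hdet
  refine ⟨N, p, hp, fun k hk => ?_⟩
  have := hper k hk
  rw [window_succ, window_succ, List.cons.injEq] at this
  exact this.1

theorem succ_le_complexity_of_not_eventuallyPeriodic {w : ℕ → Bool}
    (hw : ¬EventuallyPeriodic w) (n : ℕ) : n + 1 ≤ complexity w n := by
  induction n with
  | zero => exact (complexity_zero w).ge
  | succ n ih =>
    have : complexity w n < complexity w (n + 1) :=
      lt_of_not_ge fun h => hw (eventuallyPeriodic_of_complexity_succ_le h)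
    omega

theorem EventuallyPeriodic.exists_forall_exists_lt_shift_eq {w : ℕ → Bool}
    (hw : EventuallyPeriodic w) : ∃ K, ∀ i, ∃ i' < K, ∀ j, w (i + j) = w (i' + j) := by
  obtain ⟨N, p, hp, hper⟩ := hw
  refine ⟨N + p, fun i => ?_⟩
  induction i using Nat.strong_induction_on with
  | _ i ih =>
    by_cases hi : i < N + p
    · exact ⟨i, hi, fun _ => rfl⟩
    obtain ⟨i', hi', hshift⟩ := ih (i - p) (by omega)
    refine ⟨i', hi', fun j => ?_⟩
    rw [← hshift, ← hper (i - p + j) (by omega)]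
    congr 1
    omega

theorem EventuallyPeriodic.exists_complexity_le {w : ℕ → Bool} (hw : EventuallyPeriodic w) :
    ∃ K, ∀ n, complexity w n ≤ K := by
  obtain ⟨K, hK⟩ := hw.exists_forall_exists_lt_shift_eq
  refine ⟨K, fun n => ?_⟩
  have hsub : (Set.range fun i => window w i n) ⊆
      ((Finset.range K).image fun i => window w i n : Set (List Bool)) := by
    rintro _ ⟨i, rfl⟩
    obtain ⟨i', hi', hshift⟩ := hK i
    simp only [Finset.coe_image, Finset.coe_range]
    exact ⟨i', hi', by simp only [window, hshift]⟩
  calc complexity w n ≤ ((Finset.range K).image fun i => window w i n).card := by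
        rw [complexity_eq_ncard_range_window, ← Set.ncard_coe_finset]
        exact Set.ncard_le_ncard hsub (Finset.finite_toSet _)
    _ ≤ K := Finset.card_image_le.trans (Finset.card_range K).le

theorem eventuallyPeriodic_of_complexity_le {w : ℕ → Bool} {n : ℕ} (h : complexity w n ≤ n) :
    EventuallyPeriodic w := by
  by_contra hw
  have := succ_le_complexity_of_not_eventuallyPeriodic hw n
  omega

theorem eventuallyPeriodic_tfae (w : ℕ → Bool) :
    (EventuallyPeriodic w ↔ ∃ n : ℕ, 1 ≤ n ∧ complexity w n ≤ n) ∧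
    (EventuallyPeriodic w ↔ ∃ N : ℕ, ∀ n : ℕ, 1 ≤ n → complexity w n ≤ N) := by
  have bounded_of_periodic (hw : EventuallyPeriodic w) :
      ∃ N : ℕ, ∀ n : ℕ, 1 ≤ n → complexity w n ≤ N := by
    obtain ⟨K, hK⟩ := hw.exists_complexity_le
    exact ⟨K, fun n _ => hK n⟩
  have low_of_bounded : (∃ N : ℕ, ∀ n : ℕ, 1 ≤ n → complexity w n ≤ N) →
      ∃ n : ℕ, 1 ≤ n ∧ complexity w n ≤ n :=
    fun ⟨N, hN⟩ => ⟨N + 1, by omega, (hN (N + 1) (by omega)).trans (by omega)⟩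
  have periodic_of_low : (∃ n : ℕ, 1 ≤ n ∧ complexity w n ≤ n) → EventuallyPeriodic w :=
    fun ⟨_, _, hn⟩ => eventuallyPeriodic_of_complexity_le hn
  exact ⟨⟨low_of_bounded ∘ bounded_of_periodic, periodic_of_low⟩,
    ⟨bounded_of_periodic, periodic_of_low ∘ low_of_bounded⟩⟩

end StringBricks
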